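/- arXiv:2012.11162 — 3 statements merged into one kernel-verified Lean document; each statement's English description precedes it below -/
import Mathlib

section
/- Let G be a simple graph with n vertices and m ≥ 1 edges. If m ≥ n²/4, then the largest singular value of the LI-matrix of G equals 2m/n, i.e. σ₁(LI(G)) = 2m/n. -/
open Finset SimpleGraph
open Matrix

attribute [local instance] Classical.propDecidable

/-- The `i`-th largest value of the tuple `f` (values sorted in non-increasing order). -/
noncomputable def sortDesc {n : ℕ} (f : Fin n → ℝ) : Fin n → ℝ :=
  fun i => f (Tuple.sort f i.rev)

/-- The Laplacian eigenvalues of `G`, in non-increasing order: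
`lapEig G 0 = μ₁ ≥ lapEig G 1 = μ₂ ≥ ⋯`. -/
noncomputable def lapEig {n : ℕ} (G : SimpleGraph (Fin n)) : Fin n → ℝ :=
  sortDesc (SimpleGraph.posSemidef_lapMatrix ℝ G).isHermitian.eigenvalues

/-- The number of edges of `G`. -/
noncomputable def numEdges {n : ℕ} (G : SimpleGraph (Fin n)) : ℕ :=
  G.edgeFinset.card

/-- The singular values of the LI-matrix `LI(G) = L(G) - (2m/n)·Iₙ`, in non-increasing
order; they are the values `|μᵢ - 2m/n|` sorted non-increasingly. -/
noncomputable def LIsv {n : ℕ} (G : SimpleGraph (Fin n)) : Fin n → ℝ :=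
  sortDesc (fun i => |lapEig G i - 2 * numEdges G / n|)

/-- The Ky Fan `k`-norm of the LI-matrix of `G`: the sum of the `k` largest singular
values of `LI(G)`. -/
noncomputable def kyFanLI {n : ℕ} (G : SimpleGraph (Fin n)) (k : ℕ) : ℝ :=
  ∑ i ∈ Finset.univ.filter (fun i : Fin n => (i : ℕ) < k), LIsv G i

/-- `S_k(L(G))`, the sum of the `k` largest Laplacian eigenvalues of `G`. -/
noncomputable def lapSum {n : ℕ} (G : SimpleGraph (Fin n)) (k : ℕ) : ℝ :=
  ∑ i ∈ Finset.univ.filter (fun i : Fin n => (i : ℕ) < k), lapEig G i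

lemma quad_le {n : ℕ} (G : SimpleGraph (Fin n)) [DecidableRel G.Adj] (x : Fin n → ℝ) :
    (∑ i, ∑ j, if G.Adj i j then (x i - x j)^2 else 0) / 2 ≤ n * ∑ i, x i ^ 2 := by
  have h1 : (∑ i, ∑ j, if G.Adj i j then (x i - x j)^2 else 0)
      ≤ ∑ i : Fin n, ∑ j : Fin n, (x i - x j)^2 := by
    refine Finset.sum_le_sum fun i _ => Finset.sum_le_sum fun j _ => ?_
    split
    · exact le_refl _
    · positivity
  have h2 : ∑ i : Fin n, ∑ j : Fin n, (x i - x j)^2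
      = 2 * ((n : ℝ) * ∑ i, x i ^ 2) - 2 * (∑ i, x i)^2 := by
    have key : ∀ i : Fin n, ∑ j : Fin n, (x i - x j)^2
        = (n : ℝ) * x i ^ 2 + (∑ j, x j ^ 2) - 2 * x i * (∑ j, x j) := by
      intro i
      rw [Finset.sum_congr rfl (fun j _ => by ring :
        ∀ j ∈ Finset.univ, (x i - x j)^2 = x i ^ 2 + x j ^ 2 - 2 * x i * x j),
        Finset.sum_sub_distrib, Finset.sum_add_distrib, Finset.sum_const,
        Finset.card_univ, Fintype.card_fin, nsmul_eq_mul, ← Finset.mul_sum]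
    simp_rw [key]
    rw [Finset.sum_sub_distrib, Finset.sum_add_distrib, Finset.sum_const, Finset.card_univ,
      Fintype.card_fin, nsmul_eq_mul, ← Finset.mul_sum, ← Finset.sum_mul, ← Finset.mul_sum]
    ring
  nlinarith [sq_nonneg (∑ i, x i)]


lemma eig_le {n : ℕ} (G : SimpleGraph (Fin n)) (i : Fin n) :
    (SimpleGraph.posSemidef_lapMatrix ℝ G).isHermitian.eigenvalues i ≤ n := by
  set hL := (SimpleGraph.posSemidef_lapMatrix ℝ G).isHermitian with hLdef
  set v : Fin n → ℝ := ⇑(hL.eigenvectorBasis i) with hv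
  have hnorm : ∑ j, v j ^ 2 = 1 := by
    have h1 : ‖hL.eigenvectorBasis i‖ = 1 := hL.eigenvectorBasis.orthonormal.1 i
    rw [EuclideanSpace.norm_eq] at h1
    have h2 : ∑ j, ‖hL.eigenvectorBasis i j‖ ^ 2 = 1 := by
      have hs : (0:ℝ) ≤ ∑ j, ‖hL.eigenvectorBasis i j‖ ^ 2 :=
        Finset.sum_nonneg fun j _ => sq_nonneg _
      rw [← Real.sq_sqrt hs, h1, one_pow]
    simpa [Real.norm_eq_abs, sq_abs] using h2
  have heq : hL.eigenvalues i = v ⬝ᵥ (G.lapMatrix ℝ *ᵥ v) := by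
    have := hL.eigenvalues_eq i
    simpa using this
  have hquad : v ⬝ᵥ (G.lapMatrix ℝ *ᵥ v)
      = (∑ i, ∑ j, if G.Adj i j then (v i - v j)^2 else 0) / 2 := by
    rw [← Matrix.toLinearMap₂'_apply', SimpleGraph.lapMatrix_toLinearMap₂']
  calc hL.eigenvalues i = _ := heq
    _ = _ := hquad
    _ ≤ (n : ℝ) * ∑ j, v j ^ 2 := quad_le G v
    _ = n := by rw [hnorm, mul_one]

lemma exists_eig_zero {n : ℕ} (hn : 0 < n) (G : SimpleGraph (Fin n)) :
    ∃ i, (SimpleGraph.posSemidef_lapMatrix ℝ G).isHermitian.eigenvalues i = 0 := by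
  set hL := (SimpleGraph.posSemidef_lapMatrix ℝ G).isHermitian
  have hdet : (G.lapMatrix ℝ).det = 0 := by
    rw [← Matrix.exists_mulVec_eq_zero_iff]
    refine ⟨fun _ => 1, ?_, SimpleGraph.lapMatrix_mulVec_const_eq_zero G⟩
    intro hcon
    have := congrFun hcon ⟨0, hn⟩
    simp at this
  have := hL.det_eq_prod_eigenvalues
  rw [hdet] at this
  have := (Finset.prod_eq_zero_iff.mp this.symm)
  obtain ⟨i, _, hi⟩ := this
  exact ⟨i, by exact_mod_cast hi⟩

lemma sortDesc_zero_max {n : ℕ} (hn : 0 < n) (f : Fin n → ℝ) (j : Fin n) :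
    f j ≤ sortDesc f ⟨0, hn⟩ := by
  have hmono := Tuple.monotone_sort f
  have hj : f j = (f ∘ Tuple.sort f) ((Tuple.sort f).symm j) := by simp
  rw [hj, sortDesc]
  exact hmono (Fin.le_def.mpr (by
    simpa [Fin.rev] using Nat.le_sub_one_of_lt ((Tuple.sort f).symm j).isLt))

/-- If `G` is a simple graph with `n` vertices and `m ≥ 1` edges and
`m ≥ n²/4`, then `σ₁(LI(G)) = 2m/n`. -/
theorem stmt_0 {n : ℕ} (hn : 0 < n) (G : SimpleGraph (Fin n))
    (hm : 1 ≤ numEdges G) (h : (n : ℝ) ^ 2 / 4 ≤ (numEdges G : ℝ)) :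
    LIsv G ⟨0, hn⟩ = 2 * (numEdges G : ℝ) / n := by
  have hnR : (0:ℝ) < n := by exact_mod_cast hn
  have hmR : (1:ℝ) ≤ (numEdges G : ℝ) := by exact_mod_cast hm
  have hc0 : (0:ℝ) ≤ 2 * (numEdges G : ℝ) / n := by positivity
  have hn2c : (n : ℝ) ≤ 2 * (2 * (numEdges G : ℝ) / n) := by
    rw [show 2 * (2 * (numEdges G : ℝ) / n) = 4 * (numEdges G : ℝ) / n by ring,
      le_div_iff₀ hnR]
    nlinarith
  have hbound : ∀ i, |lapEig G i - 2 * (numEdges G : ℝ) / n|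
      ≤ 2 * (numEdges G : ℝ) / n := by
    intro i
    have h0 : 0 ≤ lapEig G i :=
      (SimpleGraph.posSemidef_lapMatrix ℝ G).eigenvalues_nonneg _
    have h1 : lapEig G i ≤ n := eig_le G _
    rw [abs_le]
    constructor <;> nlinarith
  obtain ⟨j, hj⟩ := exists_eig_zero hn G
  set e := (SimpleGraph.posSemidef_lapMatrix ℝ G).isHermitian.eigenvalues with he
  have hi0 : lapEig G ((Tuple.sort e).symm j).rev = 0 := by
    unfold lapEig sortDesc
    rw [← he, Fin.rev_rev]
    simpa using hj
  apply le_antisymm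
  · obtain ⟨k, hk⟩ : ∃ k, LIsv G ⟨0, hn⟩ = |lapEig G k - 2 * (numEdges G : ℝ) / n| :=
      ⟨_, rfl⟩
    rw [hk]
    exact hbound k
  · have hle := sortDesc_zero_max hn
      (fun i => |lapEig G i - 2 * (numEdges G : ℝ) / n|) ((Tuple.sort e).symm j).rev
    have : |lapEig G ((Tuple.sort e).symm j).rev - 2 * (numEdges G : ℝ) / n|
        = 2 * (numEdges G : ℝ) / n := by
      rw [hi0, zero_sub, abs_neg, abs_of_nonneg hc0]
    rw [this] at hle
    exact hle
end

section
/- Let G be a simple graph with n vertices, m ≥ 1 edges and maximum degree Δ. If Δ ≥ 4m/n − 1, then the largest singular value of the LI-matrix of G equals μ₁(G) − 2m/n, i.e. σ₁(LI(G)) = μ₁(G) − 2m/n. -/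
open Finset SimpleGraph

attribute [local instance] Classical.propDecidable

/-!
For a graph with at least one edge, `μ₁ ≥ Δ + 1` (Grone–Merris): take a vertex `v` of degree `Δ`
and the vector equal to `Δ` at `v`, to `-1` on the neighbours of `v` and to `0` elsewhere. The
edges at `v` alone give it Laplacian energy at least `Δ (Δ + 1)²`, while its squared norm is
`Δ (Δ + 1)`, so its Rayleigh quotient is at least `Δ + 1`. Under the hypothesis this gives
`μ₁ ≥ 4m/n`, i.e. `μ₁ - 2m/n ≥ 2m/n`, and as `0 ≤ μᵢ ≤ μ₁` every `|μᵢ - 2m/n|` is then at most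
`μ₁ - 2m/n`.
-/

open Matrix

theorem Matrix.IsHermitian.dotProduct_mulVec_le_of_eigenvalues_le {n : Type*} [Fintype n]
    [DecidableEq n] {A : Matrix n n ℝ} (hA : A.IsHermitian) {c : ℝ}
    (hc : ∀ i, hA.eigenvalues i ≤ c) (x : n → ℝ) :
    x ⬝ᵥ (A *ᵥ x) ≤ c * (x ⬝ᵥ x) := by
  have hpsd : (c • 1 - A).PosSemidef := by
    have hconj : c • 1 - A = Unitary.conjStarAlgAut ℝ _ hA.eigenvectorUnitary
        (diagonal fun i => c - hA.eigenvalues i) := by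
      conv_lhs => rw [hA.spectral_theorem]
      rw [← diagonal_sub, ← smul_one_eq_diagonal, map_sub, map_smul, map_one]
      simp
    rw [hconj, Unitary.conjStarAlgAut_apply, Unitary.isUnit_coe.posSemidef_star_right_conjugate_iff,
      posSemidef_diagonal_iff]
    exact fun i => sub_nonneg.2 (hc i)
  simpa only [star_trivial, sub_mulVec, smul_mulVec, one_mulVec, dotProduct_sub, dotProduct_smul,
    smul_eq_mul, sub_nonneg] using hpsd.dotProduct_mulVec_nonneg x

theorem le_sortDesc_zero {n : ℕ} (hn : 0 < n) (f : Fin n → ℝ) (i : Fin n) :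
    f i ≤ sortDesc f ⟨0, hn⟩ := by
  have hle : (Tuple.sort f).symm i ≤ Fin.rev ⟨0, hn⟩ := by
    have := ((Tuple.sort f).symm i).is_lt
    simp only [Fin.le_def, Fin.val_rev]
    omega
  simpa [sortDesc] using Tuple.monotone_sort f hle

theorem sortDesc_zero_eq_of_forall_le {n : ℕ} (hn : 0 < n) {f : Fin n → ℝ} {i₀ : Fin n}
    (h : ∀ i, f i ≤ f i₀) : sortDesc f ⟨0, hn⟩ = f i₀ :=
  (h _).antisymm (le_sortDesc_zero hn f i₀)

namespace SimpleGraph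

variable {V : Type*} [Fintype V] [DecidableEq V] (G : SimpleGraph V) [DecidableRel G.Adj]

theorem sum_neighborFinset_sq_le_dotProduct_lapMatrix_mulVec (v : V) (x : V → ℝ) :
    ∑ j ∈ G.neighborFinset v, (x v - x j) ^ 2 ≤ x ⬝ᵥ (G.lapMatrix ℝ *ᵥ x) := by
  set t : V → V → ℝ := fun i j => if G.Adj i j then (x i - x j) ^ 2 else 0
  have ht_symm : ∀ i j, t i j = t j i := fun i j => by
    simp only [t, G.adj_comm i j]
    split_ifs <;> ring
  have hrow : ∑ j ∈ G.neighborFinset v, (x v - x j) ^ 2 = ∑ j, t v j := by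
    rw [neighborFinset_eq_filter, Finset.sum_filter]
  have hrest : ∑ j, t v j ≤ ∑ i ∈ univ.erase v, ∑ j, t i j := calc
    ∑ j, t v j = ∑ i ∈ univ.erase v, t i v := by
      rw [Finset.sum_erase _ (by simp [t])]
      exact Finset.sum_congr rfl fun i _ => ht_symm v i
    _ ≤ ∑ i ∈ univ.erase v, ∑ j, t i j :=
      Finset.sum_le_sum fun i _ =>
        Finset.single_le_sum (fun j _ => by positivity) (Finset.mem_univ v)
  rw [← toLinearMap₂'_apply', lapMatrix_toLinearMap₂', ← add_sum_erase _ _ (mem_univ v)]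
  change _ ≤ (∑ j, t v j + ∑ i ∈ univ.erase v, ∑ j, t i j) / 2
  linarith

theorem degree_add_one_le_of_eigenvalues_le {v : V} (hv : 0 < G.degree v) {c : ℝ}
    (hc : ∀ i, (G.posSemidef_lapMatrix ℝ).isHermitian.eigenvalues i ≤ c) :
    (G.degree v : ℝ) + 1 ≤ c := by
  set d : ℝ := (G.degree v : ℝ)
  set x : V → ℝ := fun u => if u = v then d else if G.Adj v u then -1 else 0
  have hnorm : x ⬝ᵥ x = d * (d + 1) := by
    have hsq : ∀ u, x u * x u = (if u = v then d ^ 2 else 0) + if G.Adj v u then 1 else 0 :=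
      fun u => by
        by_cases huv : u = v
        · subst huv
          simp only [↓reduceIte, SimpleGraph.irrefl, add_zero, x]
          ring
        · by_cases hadj : G.Adj v u <;> simp [x, huv, hadj]
    rw [dotProduct, Finset.sum_congr rfl fun u _ => hsq u, Finset.sum_add_distrib,
      Finset.sum_ite_eq', ← degree_eq_sum_if_adj]
    simp only [mem_univ, if_true, d]
    ring
  have henergy : ∑ j ∈ G.neighborFinset v, (x v - x j) ^ 2 = d * (d + 1) ^ 2 := by
    have hterm : ∀ j ∈ G.neighborFinset v, (x v - x j) ^ 2 = (d + 1) ^ 2 := fun j hj => by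
      have hadj : G.Adj v j := (G.mem_neighborFinset v j).1 hj
      simp [x, hadj, (G.ne_of_adj hadj).symm]
    rw [Finset.sum_congr rfl hterm, Finset.sum_const, card_neighborFinset_eq_degree, nsmul_eq_mul]
  have hd : 0 < d * (d + 1) := by positivity
  have := (G.sum_neighborFinset_sq_le_dotProduct_lapMatrix_mulVec v x).trans
    ((G.posSemidef_lapMatrix ℝ).isHermitian.dotProduct_mulVec_le_of_eigenvalues_le hc x)
  rw [henergy, hnorm] at this
  nlinarith

end SimpleGraph

theorem lapEig_nonneg {n : ℕ} (G : SimpleGraph (Fin n)) (i : Fin n) : 0 ≤ lapEig G i :=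
  (G.posSemidef_lapMatrix ℝ).eigenvalues_nonneg _

theorem lapEig_le_lapEig_zero {n : ℕ} (hn : 0 < n) (G : SimpleGraph (Fin n)) (i : Fin n) :
    lapEig G i ≤ lapEig G ⟨0, hn⟩ :=
  le_sortDesc_zero hn _ (Tuple.sort _ i.rev)

theorem maxDegree_add_one_le_lapEig_zero {n : ℕ} (hn : 0 < n) (G : SimpleGraph (Fin n))
    (hm : 1 ≤ numEdges G) : (G.maxDegree : ℝ) + 1 ≤ lapEig G ⟨0, hn⟩ := by
  have : Nonempty (Fin n) := ⟨⟨0, hn⟩⟩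
  obtain ⟨v, hv⟩ := G.exists_maximal_degree_vertex
  have hpos : 0 < G.degree v := by
    rw [← hv, Nat.pos_iff_ne_zero, Ne, maxDegree_eq_zero_iff]
    rintro rfl
    simp [numEdges] at hm
  rw [hv]
  exact G.degree_add_one_le_of_eigenvalues_le hpos (le_sortDesc_zero hn _)

/-- If `G` is a simple graph with `n` vertices, `m ≥ 1` edges and maximum
degree `Δ ≥ 4m/n - 1`, then `σ₁(LI(G)) = μ₁(G) - 2m/n`. -/
theorem stmt_1 {n : ℕ} (hn : 0 < n) (G : SimpleGraph (Fin n))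
    (hm : 1 ≤ numEdges G)
    (hdel : 4 * (numEdges G : ℝ) / n - 1 ≤ (G.maxDegree : ℝ)) :
    LIsv G ⟨0, hn⟩ = lapEig G ⟨0, hn⟩ - 2 * (numEdges G : ℝ) / n := by
  set c : ℝ := 2 * (numEdges G : ℝ) / n
  have hc : 0 ≤ c := by positivity
  have hμ : 2 * c ≤ lapEig G ⟨0, hn⟩ := by
    have : 2 * c = 4 * (numEdges G : ℝ) / n := by ring
    linarith [maxDegree_add_one_le_lapEig_zero hn G hm]
  have hμc : |lapEig G ⟨0, hn⟩ - c| = lapEig G ⟨0, hn⟩ - c := abs_of_nonneg (by linarith)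
  have hmax : ∀ i, |lapEig G i - c| ≤ |lapEig G ⟨0, hn⟩ - c| := fun i => by
    rw [hμc, abs_le]
    constructor <;> linarith [lapEig_nonneg G i, lapEig_le_lapEig_zero hn G i]
  rw [LIsv, sortDesc_zero_eq_of_forall_le hn hmax, hμc]
end

section
/- Let G be a connected simple graph on n ≥ 3 vertices with m edges. Then μ₁(G) + μ₂(G) > 4m/n + 1, where μ₁(G) and μ₂(G) are the two largest Laplacian eigenvalues of G. -/
open Finset SimpleGraph

attribute [local instance] Classical.propDecidable

/-!
Write `s = 2m = ∑ μᵢ = ∑ dᵥ`. Since `∑ μᵢ² = tr L² = ∑ (dᵥ² + dᵥ) ≥ s²/n + s` by Cauchy–Schwarz,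
and `∑ μᵢ² ≤ μ₁ s`, we get `μ₁ ≥ s/n + 1`. Since `μₙ = 0`, also `s ≤ μ₁ + (n - 2) μ₂`.
These two bounds, together with `s ≥ 2(n - 1) > n` for a connected graph on `n ≥ 3` vertices,
give `(μ₁ + μ₂) n > 2s + n`.
-/

namespace Matrix.IsHermitian

variable {𝕜 ι : Type*} [RCLike 𝕜] [Fintype ι] [DecidableEq ι]

theorem trace_mul_self_eq_sum_eigenvalues_sq {A : Matrix ι ι 𝕜} (hA : A.IsHermitian) :
    (A * A).trace = ∑ i, (hA.eigenvalues i : 𝕜) ^ 2 := by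
  conv_lhs => rw [hA.spectral_theorem, ← map_mul, Unitary.conjStarAlgAut_apply, trace_mul_cycle,
    Unitary.coe_star_mul_self, one_mul, diagonal_mul_diagonal, trace_diagonal]
  simp [sq]

end Matrix.IsHermitian

namespace SimpleGraph

open Matrix

variable {V R : Type*} [Fintype V]

theorem Connected.card_lt_two_mul_card_edgeFinset {G : SimpleGraph V} [DecidableRel G.Adj]
    (hG : G.Connected) (hV : 3 ≤ Fintype.card V) :
    Fintype.card V < 2 * #G.edgeFinset := by
  have := hG.card_vert_le_card_edgeSet_add_one
  rw [Nat.card_eq_fintype_card, Nat.card_eq_fintype_card, ← edgeFinset_card] at this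
  omega

variable (G : SimpleGraph V) [DecidableRel G.Adj]

theorem trace_lapMatrix [DecidableEq V] [Ring R] :
    (G.lapMatrix R).trace = ∑ v, (G.degree v : R) := by
  simp [lapMatrix, trace_sub, degMatrix, trace_diagonal, trace_adjMatrix]

theorem trace_lapMatrix_mul_self [DecidableEq V] [CommRing R] :
    (G.lapMatrix R * G.lapMatrix R).trace = ∑ v, ((G.degree v : R) ^ 2 + G.degree v) := by
  have hDA : (G.degMatrix R * G.adjMatrix R).trace = 0 := by
    simp only [trace, diag_apply, degMatrix, diagonal_mul, adjMatrix_apply, G.loopless.irrefl,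
      if_false, mul_zero, sum_const_zero]
  have hAD : (G.adjMatrix R * G.degMatrix R).trace = 0 := by
    simp only [trace, diag_apply, degMatrix, mul_diagonal, adjMatrix_apply, G.loopless.irrefl,
      if_false, zero_mul, sum_const_zero]
  rw [lapMatrix, sub_mul, mul_sub, mul_sub, trace_sub, trace_sub, trace_sub, hDA, hAD,
    degMatrix, diagonal_mul_diagonal, trace_diagonal, trace]
  simp only [diag_apply, adjMatrix_mul_self_apply_self]
  rw [sum_add_distrib]
  simp [sq]

end SimpleGraph

section SortDesc

variable {n : ℕ} (f : Fin n → ℝ)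

theorem exists_perm_sortDesc_eq : ∃ σ : Equiv.Perm (Fin n), sortDesc f = f ∘ σ :=
  ⟨Fin.revPerm.trans (Tuple.sort f), rfl⟩

theorem sortDesc_antitone : Antitone (sortDesc f) :=
  fun _ _ hij => Tuple.monotone_sort f (Fin.rev_le_rev.mpr hij)

theorem sum_comp_sortDesc (g : ℝ → ℝ) : ∑ i, g (sortDesc f i) = ∑ i, g (f i) := by
  obtain ⟨σ, hσ⟩ := exists_perm_sortDesc_eq f
  simpa [hσ] using Equiv.sum_comp σ (g ∘ f)

theorem sum_sortDesc : ∑ i, sortDesc f i = ∑ i, f i := sum_comp_sortDesc f id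

theorem sortDesc_last_le {k : ℕ} (f : Fin (k + 1) → ℝ) (i : Fin (k + 1)) :
    sortDesc f (Fin.last k) ≤ f i := by
  obtain ⟨σ, hσ⟩ := exists_perm_sortDesc_eq f
  simpa [hσ] using sortDesc_antitone f (Fin.le_last (σ.symm i))

end SortDesc

section AntitoneSums

variable {k : ℕ}

theorem sum_sq_le_head_mul_sum {μ : Fin (k + 1) → ℝ} (hμ : Antitone μ)
    (hnonneg : ∀ i, 0 ≤ μ i) : ∑ i, μ i ^ 2 ≤ μ 0 * ∑ i, μ i := by
  rw [mul_sum]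
  exact sum_le_sum fun i _ => by
    rw [sq]; exact mul_le_mul_of_nonneg_right (hμ (Fin.zero_le i)) (hnonneg i)

theorem sum_le_head_add_mul_second {μ : Fin (k + 2) → ℝ} (hμ : Antitone μ)
    (hlast : μ (Fin.last _) = 0) : ∑ i, μ i ≤ μ 0 + k * μ 1 := by
  rw [Fin.sum_univ_succ, Fin.sum_univ_castSucc, Fin.succ_last, hlast, add_zero]
  gcongr
  calc ∑ i : Fin k, μ i.castSucc.succ ≤ ∑ _i : Fin k, μ 1 :=
        sum_le_sum fun i _ => hμ (Fin.succ_le_succ_iff.mpr (Fin.zero_le _))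
    _ = k * μ 1 := by simp

end AntitoneSums

theorem two_mul_sum_div_add_one_lt_head_add_second {k : ℕ} {μ : Fin (k + 3) → ℝ}
    (hμ : Antitone μ) (hlast : μ (Fin.last _) = 0)
    (hsq : (∑ i, μ i) ^ 2 + (k + 3 : ℕ) * ∑ i, μ i ≤ (k + 3 : ℕ) * ∑ i, μ i ^ 2)
    (hsum : (k + 3 : ℕ) < ∑ i, μ i) :
    2 * (∑ i, μ i) / (k + 3 : ℕ) + 1 < μ 0 + μ 1 := by
  have hnonneg : ∀ i, 0 ≤ μ i := fun i => hlast ▸ hμ (Fin.le_last i)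
  set s := ∑ i, μ i
  set N : ℝ := ((k + 3 : ℕ) : ℝ)
  have hN : N = k + 3 := by simp [N]
  have hs : 0 < s := by linarith
  have hhead : s + N ≤ N * μ 0 := by
    have := sum_sq_le_head_mul_sum hμ hnonneg
    nlinarith
  have htail : s ≤ μ 0 + (k + 1 : ℕ) * μ 1 := sum_le_head_add_mul_second hμ hlast
  push_cast at htail
  rw [div_add_one (by positivity), div_lt_iff₀ (by positivity)]
  -- after multiplying by `N - 2`: `(N - 3) • hhead + N • htail` and `N < s`
  nlinarith

section LapEig

variable {n : ℕ} (G : SimpleGraph (Fin n))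

theorem lapEig_antitone : Antitone (lapEig G) := sortDesc_antitone _

theorem sum_lapEig_eq_sum_degree : ∑ i, lapEig G i = ∑ v, (G.degree v : ℝ) := by
  have hA := (posSemidef_lapMatrix ℝ G).isHermitian
  rw [lapEig, sum_sortDesc, ← G.trace_lapMatrix, hA.trace_eq_sum_eigenvalues]
  simp

theorem sum_lapEig : ∑ i, lapEig G i = 2 * numEdges G := by
  rw [sum_lapEig_eq_sum_degree, numEdges]
  exact_mod_cast G.sum_degrees_eq_twice_card_edges

theorem sum_lapEig_sq : ∑ i, lapEig G i ^ 2 = ∑ v, ((G.degree v : ℝ) ^ 2 + G.degree v) := by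
  have hA := (posSemidef_lapMatrix ℝ G).isHermitian
  rw [lapEig, sum_comp_sortDesc hA.eigenvalues (· ^ 2), ← G.trace_lapMatrix_mul_self,
    hA.trace_mul_self_eq_sum_eigenvalues_sq]
  simp

theorem sq_sum_lapEig_add_le :
    (∑ i, lapEig G i) ^ 2 + n * ∑ i, lapEig G i ≤ n * ∑ i, lapEig G i ^ 2 := by
  have := sq_sum_le_card_mul_sum_sq (s := univ) (f := fun v => (G.degree v : ℝ))
  rw [sum_lapEig_sq, sum_add_distrib, mul_add, sum_lapEig_eq_sum_degree]
  simp only [card_univ, Fintype.card_fin] at this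
  linarith

theorem lapEig_last {k : ℕ} (G : SimpleGraph (Fin (k + 1))) : lapEig G (Fin.last k) = 0 := by
  have hL := posSemidef_lapMatrix ℝ G
  obtain ⟨i, -, hi⟩ : ∃ i ∈ univ, hL.isHermitian.eigenvalues i = 0 := by
    have := hL.isHermitian.det_eq_prod_eigenvalues
    rw [det_lapMatrix_eq_zero] at this
    exact prod_eq_zero_iff.mp (by exact_mod_cast this.symm)
  refine le_antisymm (hi ▸ sortDesc_last_le _ i) ?_
  exact hL.eigenvalues_nonneg _

end LapEig

/-- If `G` is a connected simple graph on `n ≥ 3` vertices with `m` edges,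
then `μ₁(G) + μ₂(G) > 4m/n + 1`. -/
theorem stmt_5 {n : ℕ} (hn : 3 ≤ n) (G : SimpleGraph (Fin n)) (hcon : G.Connected) :
    4 * (numEdges G : ℝ) / n + 1 < lapEig G ⟨0, by omega⟩ + lapEig G ⟨1, by omega⟩ := by
  obtain ⟨k, rfl⟩ : ∃ k, n = k + 3 := ⟨n - 3, by omega⟩
  have hlarge : ((k + 3 : ℕ) : ℝ) < ∑ i, lapEig G i := by
    have := hcon.card_lt_two_mul_card_edgeFinset (by simp)
    rw [Fintype.card_fin] at this
    rw [sum_lapEig, numEdges]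
    exact_mod_cast this
  have key := two_mul_sum_div_add_one_lt_head_add_second (lapEig_antitone G) (lapEig_last G)
    (sq_sum_lapEig_add_le G) hlarge
  calc 4 * (numEdges G : ℝ) / (k + 3 : ℕ) + 1 = 2 * (∑ i, lapEig G i) / (k + 3 : ℕ) + 1 := by
        rw [sum_lapEig]; ring
    _ < lapEig G 0 + lapEig G 1 := key
end
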